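/- For every extensional digraph G, every n < ω, and every x ∈ M_n(G), there exists u ∈ M_{n+1}(G) such that for all z ∈ M_ω(G), z E_ω u if and only if there is w ∈ M_ω(G) with z E_ω w and w E_ω x (the Union axiom holds in 𝕍_ω(G)). -/
import Mathlib


/-- An extensional digraph: a set `M` (of ZF-sets) together with a binary relation
`E` on `M` such that any two elements of `M` with the same `E`-predecessors are
equal. -/
structure ExtDigraph where
  /-- The carrier set. -/
  M : ZFSet
  /-- The edge relation. -/
  E : ZFSet → ZFSet → Prop
  dom_left : ∀ x y, E x y → x ∈ M
  dom_right : ∀ x y, E x y → y ∈ M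
  ext : ∀ x y, x ∈ M → y ∈ M → (∀ z, E z x ↔ E z y) → x = y

namespace ExtDigraph

/-- The von Neumann natural number `n` as a ZF-set, used as a tag. -/
def tag : ℕ → ZFSet
  | 0 => ∅
  | n + 1 => insert (tag n) (tag n)

/-- The deficiency of a digraph `(M, E)`: the collection of subsets of `M` which are
not the `E`-predecessor set of any element of `M`. -/
def defic (M : ZFSet) (E : ZFSet → ZFSet → Prop) : ZFSet :=
  (ZFSet.powerset M).sep fun X => ¬ ∃ y, y ∈ M ∧ ∀ z, z ∈ M → (z ∈ X ↔ E z y)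

/-- The digraphs `𝕍_n(G) = (M_n, E_n)`, defined recursively:
`M_0 = {0} × M` with `(0,x) E_0 (0,y)` iff `x E y`; and
`M_{n+1} = M_n ∪ ({n+1} × D(𝕍_n))` where `E_{n+1}` adds the pairs
`(z, (n+1, X))` for `z ∈ X ∈ D(𝕍_n)`. -/
def lvl (G : ExtDigraph) : ℕ → ZFSet × (ZFSet → ZFSet → Prop)
  | 0 =>
    (ZFSet.prod {tag 0} G.M,
      fun a b => ∃ x y, G.E x y ∧ a = ZFSet.pair (tag 0) x ∧ b = ZFSet.pair (tag 0) y)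
  | n + 1 =>
    let p := lvl G n
    (p.1 ∪ ZFSet.prod {tag (n + 1)} (defic p.1 p.2),
      fun a b => p.2 a b ∨
        ∃ X, X ∈ defic p.1 p.2 ∧ b = ZFSet.pair (tag (n + 1)) X ∧ a ∈ X)

/-- The carrier `M_n(G)` of `𝕍_n(G)`. -/
def Mlvl (G : ExtDigraph) (n : ℕ) : ZFSet := (lvl G n).1

/-- The edge relation `E_n(G)` of `𝕍_n(G)`. -/
def Elvl (G : ExtDigraph) (n : ℕ) : ZFSet → ZFSet → Prop := (lvl G n).2

/-- Membership in `M_ω(G) = ⋃_{n<ω} M_n(G)`. -/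
def MemMomega (G : ExtDigraph) (x : ZFSet) : Prop := ∃ n, x ∈ Mlvl G n

/-- The edge relation `E_ω(G) = ⋃_{n<ω} E_n(G)` of `𝕍_ω(G)`. -/
def Eomega (G : ExtDigraph) (a b : ZFSet) : Prop := ∃ n, Elvl G n a b

/-- The carrier of `𝕍_m(G)` for `m ≤ ω` (with `⊤` standing for `ω`), as a class. -/
def MlvlI (G : ExtDigraph) : ℕ∞ → Set ZFSet :=
  WithTop.recTopCoe {x | MemMomega G x} fun n => {x | x ∈ Mlvl G n}

/-- The edge relation of `𝕍_m(G)` for `m ≤ ω` (with `⊤` standing for `ω`). -/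
def ElvlI (G : ExtDigraph) : ℕ∞ → ZFSet → ZFSet → Prop :=
  WithTop.recTopCoe (Eomega G) fun n => Elvl G n

end ExtDigraph

open ExtDigraph

namespace ExtDigraph
section Aux

lemma tag_mem_of_lt {m n : ℕ} (h : m < n) : tag m ∈ tag n := by
  induction n with
  | zero => omega
  | succ n ih =>
    rw [tag, ZFSet.mem_insert_iff]
    rcases Nat.lt_succ_iff_lt_or_eq.mp h with h | h
    · exact Or.inr (ih h)
    · exact Or.inl (by rw [h])

lemma tag_injective : Function.Injective tag := by
  intro m n h
  by_contra hne
  rcases lt_or_gt_of_ne hne with hlt | hlt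
  · have := tag_mem_of_lt hlt; rw [h] at this; exact ZFSet.mem_irrefl _ this
  · have := tag_mem_of_lt hlt; rw [← h] at this; exact ZFSet.mem_irrefl _ this

lemma Mlvl_succ (G : ExtDigraph) (n : ℕ) :
    Mlvl G (n + 1) = Mlvl G n ∪ ZFSet.prod {tag (n + 1)} (defic (Mlvl G n) (Elvl G n)) := rfl

lemma Elvl_succ (G : ExtDigraph) (n : ℕ) (a b : ZFSet) :
    Elvl G (n + 1) a b ↔ Elvl G n a b ∨
      ∃ X, X ∈ defic (Mlvl G n) (Elvl G n) ∧ b = ZFSet.pair (tag (n + 1)) X ∧ a ∈ X :=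
  Iff.rfl

lemma Mlvl_mono (G : ExtDigraph) {m n : ℕ} (h : m ≤ n) {x : ZFSet}
    (hx : x ∈ Mlvl G m) : x ∈ Mlvl G n := by
  induction n with
  | zero => rwa [Nat.le_zero.mp h] at hx
  | succ n ih =>
    rcases Nat.le_succ_iff.mp h with h | h
    · exact ZFSet.mem_union.mpr (Or.inl (ih h))
    · rwa [h] at hx

lemma Elvl_mono (G : ExtDigraph) {m n : ℕ} (h : m ≤ n) {a b : ZFSet}
    (hab : Elvl G m a b) : Elvl G n a b := by
  induction n with
  | zero => rwa [Nat.le_zero.mp h] at hab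
  | succ n ih =>
    rcases Nat.le_succ_iff.mp h with h | h
    · exact Or.inl (ih h)
    · rwa [h] at hab

/-- Every element of `M_n` is a pair `(tag k, w)` with `k ≤ n`. -/
lemma Mlvl_form (G : ExtDigraph) (n : ℕ) {x : ZFSet} (hx : x ∈ Mlvl G n) :
    ∃ k ≤ n, ∃ w, x = ZFSet.pair (tag k) w := by
  induction n with
  | zero =>
    rcases ZFSet.mem_prod.mp hx with ⟨a, ha, b, hb, rfl⟩
    exact ⟨0, le_refl 0, b, by rw [ZFSet.mem_singleton.mp ha]⟩
  | succ n ih =>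
    rcases ZFSet.mem_union.mp hx with h | h
    · rcases ih h with ⟨k, hk, w, hw⟩
      exact ⟨k, hk.trans (Nat.le_succ n), w, hw⟩
    · rcases ZFSet.mem_prod.mp h with ⟨a, ha, b, hb, rfl⟩
      exact ⟨n + 1, le_refl _, b, by rw [ZFSet.mem_singleton.mp ha]⟩

lemma Elvl_dom (G : ExtDigraph) (n : ℕ) {a b : ZFSet} (hab : Elvl G n a b) :
    a ∈ Mlvl G n ∧ b ∈ Mlvl G n := by
  induction n with
  | zero =>
    rcases hab with ⟨x, y, hxy, rfl, rfl⟩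
    constructor
    · exact ZFSet.mem_prod.mpr ⟨_, ZFSet.mem_singleton.mpr rfl, _, G.dom_left _ _ hxy, rfl⟩
    · exact ZFSet.mem_prod.mpr ⟨_, ZFSet.mem_singleton.mpr rfl, _, G.dom_right _ _ hxy, rfl⟩
  | succ n ih =>
    rcases hab with h | ⟨X, hX, rfl, haX⟩
    · exact ⟨ZFSet.mem_union.mpr (Or.inl (ih h).1), ZFSet.mem_union.mpr (Or.inl (ih h).2)⟩
    · have hXsub : X ⊆ Mlvl G n :=
        ZFSet.mem_powerset.mp (ZFSet.mem_sep.mp hX).1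
      refine ⟨ZFSet.mem_union.mpr (Or.inl (hXsub haX)), ZFSet.mem_union.mpr (Or.inr ?_)⟩
      exact ZFSet.mem_prod.mpr ⟨_, ZFSet.mem_singleton.mpr rfl, _, hX, rfl⟩

/-- Stability: an edge into an element of `M_n` already exists at level `n`. -/
lemma Elvl_stable (G : ExtDigraph) {n m : ℕ} {a b : ZFSet} (hb : b ∈ Mlvl G n)
    (hab : Elvl G m a b) : Elvl G n a b := by
  rcases le_or_gt m n with h | h
  · exact Elvl_mono G h hab
  · induction m with
    | zero => omega
    | succ m ih =>
      rcases hab with hab | ⟨X, hX, rfl, haX⟩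
      · rcases le_or_gt m n with h' | h'
        · exact Elvl_mono G h' hab
        · exact ih hab h'
      · rcases Mlvl_form G n hb with ⟨k, hk, w, hw⟩
        have := (ZFSet.pair_injective hw.symm).1
        have := tag_injective this
        omega

end Aux

end ExtDigraph

/-- **Union in `𝕍_ω(G)`.** For every extensional digraph `G`, every `n < ω` and
every `x ∈ M_n(G)`, there is `u ∈ M_{n+1}(G)` such that for all `z ∈ M_ω(G)`,
`z E_ω u` iff there is `w ∈ M_ω(G)` with `z E_ω w` and `w E_ω x`. -/
theorem Vomega_union (G : ExtDigraph) (n : ℕ) (x : ZFSet) (hx : x ∈ Mlvl G n) :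
    ∃ u, u ∈ Mlvl G (n + 1) ∧
      ∀ z, MemMomega G z →
        (Eomega G z u ↔ ∃ w, MemMomega G w ∧ Eomega G z w ∧ Eomega G w x) := by
  classical
  set U : ZFSet := (Mlvl G n).sep
    (fun z => ∃ w, w ∈ Mlvl G n ∧ Elvl G n z w ∧ Elvl G n w x) with hUdefn
  have key : ∀ z, (∃ w, MemMomega G w ∧ Eomega G z w ∧ Eomega G w x) ↔ z ∈ U := by
    intro z
    constructor
    · rintro ⟨w, _, ⟨m1, hzw⟩, ⟨m2, hwx⟩⟩
      have hwx' : Elvl G n w x := Elvl_stable G hx hwx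
      have hwMn : w ∈ Mlvl G n := (Elvl_dom G n hwx').1
      have hzw' : Elvl G n z w := Elvl_stable G hwMn hzw
      exact ZFSet.mem_sep.mpr ⟨(Elvl_dom G n hzw').1, w, hwMn, hzw', hwx'⟩
    · intro hz
      rcases ZFSet.mem_sep.mp hz with ⟨hzM, w, hwM, hzw, hwx⟩
      exact ⟨w, ⟨n, hwM⟩, ⟨n, hzw⟩, ⟨n, hwx⟩⟩
  by_cases hcase : ∃ y, y ∈ Mlvl G n ∧ ∀ z, z ∈ Mlvl G n → (z ∈ U ↔ Elvl G n z y)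
  · rcases hcase with ⟨y, hyM, hy⟩
    refine ⟨y, Mlvl_mono G (Nat.le_succ n) hyM, fun z hz => ?_⟩
    rw [key z]
    constructor
    · rintro ⟨m, hzy⟩
      have hzy' : Elvl G n z y := Elvl_stable G hyM hzy
      exact (hy z (Elvl_dom G n hzy').1).mpr hzy'
    · intro hzU
      exact ⟨n, (hy z (ZFSet.mem_sep.mp hzU).1).mp hzU⟩
  · have hUdef : U ∈ defic (Mlvl G n) (Elvl G n) := by
      refine ZFSet.mem_sep.mpr
        ⟨ZFSet.mem_powerset.mpr (fun t ht => (ZFSet.mem_sep.mp ht).1), ?_⟩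
      rintro ⟨y, hyM, hy⟩
      exact hcase ⟨y, hyM, hy⟩
    have huM : ZFSet.pair (tag (n + 1)) U ∈ Mlvl G (n + 1) :=
      ZFSet.mem_union.mpr (Or.inr
        (ZFSet.mem_prod.mpr ⟨_, ZFSet.mem_singleton.mpr rfl, _, hUdef, rfl⟩))
    refine ⟨ZFSet.pair (tag (n + 1)) U, huM, fun z hz => ?_⟩
    rw [key z]
    constructor
    · rintro ⟨m, h⟩
      have h' : Elvl G (n + 1) z (ZFSet.pair (tag (n + 1)) U) := Elvl_stable G huM h
      rcases h' with h' | ⟨X, _, hbX, hzX⟩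
      · exfalso
        rcases Mlvl_form G n (Elvl_dom G n h').2 with ⟨k, hk, w, hw⟩
        have := tag_injective (ZFSet.pair_injective hw).1
        omega
      · rwa [(ZFSet.pair_injective hbX).2]
    · intro hzU
      exact ⟨n + 1, Or.inr ⟨U, hUdef, rfl, hzU⟩⟩
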